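/- arXiv:1502.03379 — 5 statements merged into one kernel-verified Lean document; each statement's English description precedes it below -/
import Mathlib

section
/- In a binary network, every vertex that has a child which is a stable tree vertex is itself stable. (Proposition 1(1)) -/
/-!
Common framework: a binary phylogenetic network is modelled as a directed graph
on an ambient type `V`, given by a vertex set `verts : Set V`, an adjacency
relation `adj : V → V → Prop` (no parallel edges are possible in this model),
and a root vertex `root`.
-/

/-- The outdegree of a vertex `v`: the number of its out-neighbours. -/
noncomputable def outdeg {V : Type*} (adj : V → V → Prop) (v : V) : ℕ :=
  {u | adj v u}.ncard

/-- The indegree of a vertex `v`: the number of its in-neighbours. -/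
noncomputable def indeg {V : Type*} (adj : V → V → Prop) (v : V) : ℕ :=
  {u | adj u v}.ncard

/-- A leaf of the network: a vertex with outdegree 0. -/
def IsLeaf {V : Type*} (verts : Set V) (adj : V → V → Prop) (v : V) : Prop :=
  v ∈ verts ∧ outdeg adj v = 0

/-- A tree vertex: indegree 1 and outdegree 2. -/
def IsTreeVertex {V : Type*} (adj : V → V → Prop) (v : V) : Prop :=
  indeg adj v = 1 ∧ outdeg adj v = 2

/-- A reticulation: indegree 2 and outdegree 1. -/
def IsReticulation {V : Type*} (adj : V → V → Prop) (v : V) : Prop :=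
  indeg adj v = 2 ∧ outdeg adj v = 1

/-- `l` is a directed path from `a` to `b`: a nonempty list of vertices starting
at `a`, ending at `b`, each consecutive pair joined by an edge. -/
def IsPathFromTo {V : Type*} (adj : V → V → Prop) (l : List V) (a b : V) : Prop :=
  l.Chain' adj ∧ l.head? = some a ∧ l.getLast? = some b

/-- A binary phylogenetic network: a finite DAG with a unique root (the only
vertex of indegree 0) of outdegree 2, in which every vertex is reachable from
the root, every leaf has indegree 1, and every other non-root vertex is either
a tree vertex or a reticulation. -/
structure IsBinaryNetwork {V : Type*} (verts : Set V) (adj : V → V → Prop) (root : V) : Prop where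
  finite_verts : verts.Finite
  root_mem : root ∈ verts
  adj_mem : ∀ ⦃u v : V⦄, adj u v → u ∈ verts ∧ v ∈ verts
  acyclic : ∀ v : V, ¬ Relation.TransGen adj v v
  root_indeg : indeg adj root = 0
  root_outdeg : outdeg adj root = 2
  root_unique : ∀ v ∈ verts, indeg adj v = 0 → v = root
  reach : ∀ v ∈ verts, Relation.ReflTransGen adj root v
  leaf_indeg : ∀ v ∈ verts, outdeg adj v = 0 → indeg adj v = 1
  internal_deg : ∀ v ∈ verts, v ≠ root → outdeg adj v ≠ 0 →
      IsTreeVertex adj v ∨ IsReticulation adj v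

/-- `x` is stable: there is a leaf `ℓ` such that `x` lies on every directed
path from the root to `ℓ`. -/
def Stable {V : Type*} (verts : Set V) (adj : V → V → Prop) (root x : V) : Prop :=
  ∃ ℓ, IsLeaf verts adj ℓ ∧ ∀ l : List V, IsPathFromTo adj l root ℓ → x ∈ l

/-- A network is reticulation-visible if every reticulation is stable. -/
def ReticulationVisible {V : Type*} (verts : Set V) (adj : V → V → Prop) (root : V) : Prop :=
  ∀ v ∈ verts, IsReticulation adj v → Stable verts adj root v

/-- A network is nearly stable if every vertex is stable or all of its parents
are stable. -/
def NearlyStable {V : Type*} (verts : Set V) (adj : V → V → Prop) (root : V) : Prop :=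
  ∀ v ∈ verts, Stable verts adj root v ∨ ∀ p : V, adj p v → Stable verts adj root p

/-!
A tree vertex `y` has a unique parent `x`, and `y` is not the root. On a directed path from
the root through `y`, the vertex just before `y` is a parent of `y`, hence is `x`. So every
root-to-leaf path avoiding `x` also avoids `y`, and the leaf witnessing the stability of `y`
witnesses that of `x`.
-/

theorem List.IsChain.exists_mem_rel_of_mem_of_ne_head {α : Type*} {R : α → α → Prop}
    {l : List α} (hl : l.IsChain R) {a z : α} (ha : l.head? = some a) (hz : z ∈ l)
    (hza : z ≠ a) : ∃ p ∈ l, R p z := by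
  obtain ⟨i, hi, rfl⟩ := List.getElem_of_mem hz
  cases i with
  | zero =>
    rw [List.head?_eq_getElem?, List.getElem?_eq_getElem hi, Option.some_inj] at ha
    exact absurd ha hza
  | succ j => exact ⟨l[j], List.getElem_mem _, hl.getElem j hi⟩

theorem eq_of_adj_of_indeg_eq_one {V : Type*} {adj : V → V → Prop} {x y z : V}
    (hy : indeg adj y = 1) (hxy : adj x y) (hzy : adj z y) : x = z := by
  obtain ⟨p, hp⟩ := Set.ncard_eq_one.mp hy
  have hx : x ∈ ({p} : Set V) := hp ▸ hxy
  have hz : z ∈ ({p} : Set V) := hp ▸ hzy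
  rw [Set.mem_singleton_iff] at hx hz
  rw [hx, hz]

theorem IsPathFromTo.mem_of_adj_of_indeg_eq_one {V : Type*} {adj : V → V → Prop} {l : List V}
    {a b x y : V} (hl : IsPathFromTo adj l a b) (hy : indeg adj y = 1) (hxy : adj x y)
    (hyl : y ∈ l) (hya : y ≠ a) : x ∈ l := by
  obtain ⟨p, hpl, hpy⟩ := List.IsChain.exists_mem_rel_of_mem_of_ne_head hl.1 hl.2.1 hyl hya
  rwa [eq_of_adj_of_indeg_eq_one hy hpy hxy] at hpl

theorem IsBinaryNetwork.ne_root_of_indeg_eq_one {V : Type*} {verts : Set V}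
    {adj : V → V → Prop} {root y : V} (hN : IsBinaryNetwork verts adj root)
    (hy : indeg adj y = 1) : y ≠ root := by
  rintro rfl
  rw [hN.root_indeg] at hy
  exact zero_ne_one hy

/-- In a binary network, every vertex that has a child which is a stable tree
vertex is itself stable. (Proposition 1(1)) -/
theorem stable_of_stable_treeVertex_child {V : Type*} (verts : Set V)
    (adj : V → V → Prop) (root : V) (hN : IsBinaryNetwork verts adj root)
    (x y : V) (hxy : adj x y) (hy : IsTreeVertex adj y)
    (hys : Stable verts adj root y) :
    Stable verts adj root x := by
  obtain ⟨ℓ, hℓ, hyl⟩ := hys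
  exact ⟨ℓ, hℓ, fun l hl => hl.mem_of_adj_of_indeg_eq_one hy.1 hxy (hyl l hl)
    (hN.ne_root_of_indeg_eq_one hy.1)⟩
end

section
/- In a binary network, a reticulation is stable if and only if its unique child is either a leaf or a stable tree vertex. (Precise form of Proposition 1(2)) -/
/-!
A stable vertex dominates some leaf `ℓ`: it lies on every root-to-`ℓ` path. If the child `c`
of the reticulation `r` has `r` as its only parent, every path through `c` passes through `r`
just before, so `r` dominates whatever `c` dominates (and a leaf dominates itself).
Conversely, if `r` dominates `ℓ`, then so does its unique child `c`. Then `c` cannot be a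
reticulation: a root-to-`ℓ` path through the other parent of `c` would avoid `r`, since meeting
`r` before `c` or after `c` closes a directed cycle through the edge `r → c`.
-/

section Paths

variable {V : Type*} {adj : V → V → Prop} {l l₁ l₂ : List V} {a b x : V}

theorem IsPathFromTo.reverse (h : IsPathFromTo adj l a b) :
    IsPathFromTo (flip adj) l.reverse b a :=
  ⟨List.isChain_reverse.mpr h.1, by simpa using h.2.2, by simpa using h.2.1⟩

theorem IsPathFromTo.exists_adj_mem_of_ne_head :
    ∀ {l : List V} {a : V}, IsPathFromTo adj l a b → x ∈ l → x ≠ a → ∃ u ∈ l, adj u x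
  | [], _, h, _, _ => by simp [IsPathFromTo] at h
  | [y], a, h, hx, hxa => by
    obtain rfl : y = a := by simpa using h.2.1
    exact absurd (List.mem_singleton.mp hx) hxa
  | y :: z :: t, a, h, hx, hxa => by
    obtain rfl : y = a := by simpa using h.2.1
    obtain ⟨hyz, hzt⟩ := List.isChain_cons_cons.mp h.1
    have hx' : x ∈ z :: t := (List.mem_cons.mp hx).resolve_left hxa
    by_cases hxz : x = z
    · exact ⟨y, by simp, hxz ▸ hyz⟩
    · have htail : IsPathFromTo adj (z :: t) z b := ⟨hzt, rfl, by simpa using h.2.2⟩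
      obtain ⟨u, hu, hux⟩ := htail.exists_adj_mem_of_ne_head hx' hxz
      exact ⟨u, List.mem_cons_of_mem y hu, hux⟩

theorem IsPathFromTo.exists_mem_adj_of_ne_last (h : IsPathFromTo adj l a b) (hx : x ∈ l)
    (hxb : x ≠ b) : ∃ u ∈ l, adj x u := by
  simpa [flip] using h.reverse.exists_adj_mem_of_ne_head (List.mem_reverse.mpr hx) hxb

theorem IsPathFromTo.reflTransGen_of_mem (h : IsPathFromTo adj l a b) (hx : x ∈ l) :
    Relation.ReflTransGen adj a x := by
  refine h.1.induction (Relation.ReflTransGen adj a ·) l (fun _ _ hxy hx => hx.tail hxy)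
    (fun hne => ?_) x hx
  have hhead := h.2.1
  rw [List.head?_eq_some_head hne] at hhead
  exact Option.some_injective _ hhead ▸ .refl

theorem IsPathFromTo.reflTransGen_to_last (h : IsPathFromTo adj l a b) (hx : x ∈ l) :
    Relation.ReflTransGen adj x b :=
  Relation.reflTransGen_swap.mp (h.reverse.reflTransGen_of_mem (List.mem_reverse.mpr hx))

theorem exists_isPathFromTo_of_reflTransGen (h : Relation.ReflTransGen adj a b) :
    ∃ l, IsPathFromTo adj l a b := by
  obtain ⟨l, hne, hl, rfl, rfl⟩ := List.exists_isChain_ne_nil_of_relationReflTransGen h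
  exact ⟨l, hl, List.head?_eq_some_head hne, List.getLast?_eq_some_getLast hne⟩

theorem IsPathFromTo.append {c p : V} (h₁ : IsPathFromTo adj l₁ a p)
    (h₂ : IsPathFromTo adj l₂ c b) (hpc : adj p c) : IsPathFromTo adj (l₁ ++ l₂) a b := by
  refine ⟨List.isChain_append.mpr ⟨h₁.1, h₂.1, ?_⟩, ?_, ?_⟩
  · intro x hx y hy
    rw [h₁.2.2, Option.mem_some_iff] at hx
    rw [h₂.2.1, Option.mem_some_iff] at hy
    exact hx ▸ hy ▸ hpc
  · rw [List.head?_append, h₁.2.1]; rfl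
  · rw [List.getLast?_append, h₂.2.2]; rfl

end Paths

def Dominates {V : Type*} (adj : V → V → Prop) (root x ℓ : V) : Prop :=
  ∀ l : List V, IsPathFromTo adj l root ℓ → x ∈ l

section Dominates

variable {V : Type*} {adj : V → V → Prop} {root x ℓ : V}

theorem dominates_refl (root ℓ : V) : Dominates adj root ℓ ℓ :=
  fun _ hl => List.mem_of_getLast? hl.2.2

theorem Dominates.reflTransGen (hx : Dominates adj root x ℓ)
    (hℓ : Relation.ReflTransGen adj root ℓ) : Relation.ReflTransGen adj x ℓ := by
  obtain ⟨l, hl⟩ := exists_isPathFromTo_of_reflTransGen hℓ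
  exact hl.reflTransGen_to_last (hx l hl)

theorem Dominates.to_unique_parent {p : V} (hx : Dominates adj root x ℓ) (hxroot : x ≠ root)
    (hpar : ∀ u, adj u x → u = p) : Dominates adj root p ℓ := fun l hl => by
  obtain ⟨u, hu, hux⟩ := hl.exists_adj_mem_of_ne_head (hx l hl) hxroot
  exact hpar u hux ▸ hu

theorem Dominates.to_unique_child {c : V} (hx : Dominates adj root x ℓ) (hxℓ : x ≠ ℓ)
    (hchild : ∀ u, adj x u → u = c) : Dominates adj root c ℓ := fun l hl => by
  obtain ⟨u, hu, hxu⟩ := hl.exists_mem_adj_of_ne_last (hx l hl) hxℓ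
  exact hchild u hxu ▸ hu

theorem Dominates.eq_of_adj_of_unique_child {r c p : V} (hr : Dominates adj root r ℓ)
    (hacyclic : ∀ v, ¬ Relation.TransGen adj v v) (hrc : adj r c)
    (hchild : ∀ u, adj r u → u = c) (hp : Relation.ReflTransGen adj root p) (hpc : adj p c)
    (hcℓ : Relation.ReflTransGen adj c ℓ) : p = r := by
  by_contra hpr
  obtain ⟨l₁, hl₁⟩ := exists_isPathFromTo_of_reflTransGen hp
  obtain ⟨l₂, hl₂⟩ := exists_isPathFromTo_of_reflTransGen hcℓ
  have hr₁ : r ∉ l₁ := fun hmem => by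
    obtain ⟨u, hu, hru⟩ := hl₁.exists_mem_adj_of_ne_last hmem (Ne.symm hpr)
    exact hacyclic c (.tail' (hchild u hru ▸ hl₁.reflTransGen_to_last hu) hpc)
  have hr₂ : r ∉ l₂ := fun hmem =>
    hacyclic r (.head' hrc (hl₂.reflTransGen_of_mem hmem))
  rcases List.mem_append.mp (hr _ (hl₁.append hl₂ hpc)) with h | h
  · exact hr₁ h
  · exact hr₂ h

end Dominates

section Degrees

variable {V : Type*} {adj : V → V → Prop} {u v : V}

theorem eq_of_adj_of_outdeg_eq_one (hv : outdeg adj v = 1) (hvu : adj v u) :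
    ∀ w, adj v w → w = u := by
  obtain ⟨x, hx⟩ := Set.ncard_eq_one.mp hv
  have hxu : u = x := by simpa [hx] using show u ∈ {w | adj v w} from hvu
  intro w hw
  simpa [hx, hxu] using show w ∈ {w | adj v w} from hw

theorem eq_of_adj_of_indeg_eq_one_s1 (hv : indeg adj v = 1) (huv : adj u v) :
    ∀ w, adj w v → w = u :=
  eq_of_adj_of_outdeg_eq_one (adj := flip adj) hv huv

theorem exists_adj_ne_of_indeg_eq_two (hv : indeg adj v = 2) (u : V) :
    ∃ p, adj p v ∧ p ≠ u :=
  Set.exists_ne_of_one_lt_ncard (s := {w | adj w v}) (one_lt_two.trans_eq hv.symm) u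

theorem IsBinaryNetwork.ne_root_of_adj {verts : Set V} {root : V}
    (hN : IsBinaryNetwork verts adj root) (huv : adj u v) : v ≠ root := by
  rintro rfl
  have hfin : {w | adj w v}.Finite := hN.finite_verts.subset fun w hw => (hN.adj_mem hw).1
  exact Set.eq_empty_iff_forall_notMem.mp ((Set.ncard_eq_zero hfin).mp hN.root_indeg) u huv

end Degrees

/-- In a binary network, a reticulation is stable if and only if its unique
child is either a leaf or a stable tree vertex. (Proposition 1(2)) -/
theorem reticulation_stable_iff {V : Type*} (verts : Set V)
    (adj : V → V → Prop) (root : V) (hN : IsBinaryNetwork verts adj root)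
    (r c : V) (hr : IsReticulation adj r) (hrc : adj r c) :
    Stable verts adj root r ↔
      IsLeaf verts adj c ∨ (IsTreeVertex adj c ∧ Stable verts adj root c) := by
  have hchild := eq_of_adj_of_outdeg_eq_one hr.2 hrc
  have hc_ne_root := hN.ne_root_of_adj hrc
  have hc_mem := (hN.adj_mem hrc).2
  constructor
  · rintro ⟨ℓ, hℓ, hrℓ : Dominates adj root r ℓ⟩
    have hr_ne_ℓ : r ≠ ℓ := fun h => by simpa [h, hℓ.2] using hr.2
    have hcℓ : Dominates adj root c ℓ := hrℓ.to_unique_child hr_ne_ℓ hchild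
    by_cases hout : outdeg adj c = 0
    · exact .inl ⟨hc_mem, hout⟩
    rcases hN.internal_deg c hc_mem hc_ne_root hout with htree | hret
    · exact .inr ⟨htree, ℓ, hℓ, hcℓ⟩
    · obtain ⟨p, hpc, hpr⟩ := exists_adj_ne_of_indeg_eq_two hret.1 r
      exact absurd (hrℓ.eq_of_adj_of_unique_child hN.acyclic hrc hchild
        (hN.reach p (hN.adj_mem hpc).1) hpc (hcℓ.reflTransGen (hN.reach ℓ hℓ.1))) hpr
  · rintro (hleaf | ⟨htree, ℓ, hℓ, hcℓ : Dominates adj root c ℓ⟩)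
    · exact ⟨c, hleaf, (dominates_refl root c).to_unique_parent hc_ne_root
        (eq_of_adj_of_indeg_eq_one_s1 (hN.leaf_indeg c hc_mem hleaf.2) hrc)⟩
    · exact ⟨ℓ, hℓ, hcℓ.to_unique_parent hc_ne_root (eq_of_adj_of_indeg_eq_one_s1 htree.1 hrc)⟩
end

section
/- Let N be a binary reticulation-visible network. Then there exists a function f assigning to every reticulation r of N one of its parents such that f is injective; consequently, deleting from N the edge (f(r), r) for every reticulation r yields a spanning subgraph in which every non-leaf vertex of N still has outdegree at least 1 (i.e., the resulting spanning tree has no dummy leaves). (Lemma 1) -/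
section helpers
variable {V : Type*} {adj : V → V → Prop}

lemma path_rtg : ∀ {l : List V} {a b : V}, IsPathFromTo adj l a b →
    Relation.ReflTransGen adj a b
  | [], a, b, ⟨_, hh, _⟩ => by simp at hh
  | [y], a, b, ⟨_, hh, hl⟩ => by
    have h1 : y = a := by simpa using hh
    have h2 : y = b := by simpa using hl
    rw [← h1, ← h2]
  | y :: z :: t, a, b, ⟨hc, hh, hl⟩ => by
    have h1 : y = a := by simpa using hh
    simp only [List.Chain', List.isChain_cons_cons] at hc
    rw [List.getLast?_cons_cons] at hl
    exact h1 ▸ Relation.ReflTransGen.head hc.1 (path_rtg ⟨hc.2, rfl, hl⟩)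

lemma path_of_rtg {a b : V} (h : Relation.ReflTransGen adj a b) :
    ∃ l, IsPathFromTo adj l a b := by
  induction h with
  | refl => exact ⟨[a], List.isChain_singleton a, rfl, rfl⟩
  | @tail c d hbc hadj ih =>
    obtain ⟨l, hc, hh, hl⟩ := ih
    cases l with
    | nil => simp at hh
    | cons x t =>
      refine ⟨(x :: t) ++ [d], ?_, by simpa using hh, List.getLast?_concat⟩
      simp only [List.Chain', List.isChain_append]
      refine ⟨hc, List.isChain_singleton _, ?_⟩
      intro u hu v hv
      have hu' : c = u := by rw [hl] at hu; simpa using hu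
      have hv' : d = v := by simpa using hv
      rw [← hu', ← hv']
      exact hadj

lemma path_split : ∀ {l : List V} {a b x : V}, IsPathFromTo adj l a b → x ∈ l →
    Relation.ReflTransGen adj a x ∧ ∃ l2, IsPathFromTo adj (x :: l2) x b
  | [], a, b, x, ⟨_, hh, _⟩, hx => by simp at hx
  | y :: t, a, b, x, ⟨hc, hh, hl⟩, hx => by
    have hya : y = a := by simpa using hh
    rcases List.mem_cons.mp hx with rfl | hx'
    · exact ⟨by rw [← hya], t, hc, rfl, hl⟩
    · cases t with
      | nil => simp at hx'
      | cons z t' =>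
        simp only [List.Chain', List.isChain_cons_cons] at hc
        rw [List.getLast?_cons_cons] at hl
        obtain ⟨h1, h2⟩ := path_split ⟨hc.2, rfl, hl⟩ hx'
        exact ⟨hya ▸ Relation.ReflTransGen.head hc.1 h1, h2⟩

lemma path_append {l1 l2 : List V} {a m m' b : V} (h1 : IsPathFromTo adj l1 a m)
    (hadj : adj m m') (h2 : IsPathFromTo adj l2 m' b) : IsPathFromTo adj (l1 ++ l2) a b := by
  obtain ⟨hc1, hh1, hl1⟩ := h1
  obtain ⟨hc2, hh2, hl2⟩ := h2
  refine ⟨?_, ?_, ?_⟩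
  · simp only [List.Chain', List.isChain_append]
    refine ⟨hc1, hc2, ?_⟩
    intro u hu v hv
    have hu' : m = u := by rw [hl1] at hu; simpa using hu
    have hv' : m' = v := by rw [hh2] at hv; simpa using hv
    rw [← hu', ← hv']
    exact hadj
  · cases l1 with
    | nil => simp at hh1
    | cons p t => simpa using hh1
  · rw [List.getLast?_append, hl2]
    rfl

end helpers

section network
variable {V : Type*} {verts : Set V} {adj : V → V → Prop} {root : V}

/-- In a reticulation-visible network, a reticulation has no reticulation child. -/
lemma no_retic_chain (hN : IsBinaryNetwork verts adj root)
    (hRV : ReticulationVisible verts adj root)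
    {r s : V} (hr : IsReticulation adj r) (hs : IsReticulation adj s) (hrs : adj r s) :
    False := by
  have hrv : r ∈ verts := (hN.adj_mem hrs).1
  obtain ⟨ℓ, hℓ, hstab⟩ := hRV r hrv hr
  -- the unique child of r is s
  have hchild : ∀ u, adj r u → u = s := by
    obtain ⟨c, hc⟩ := Set.ncard_eq_one.mp hr.2
    intro u hu
    have h1 : u ∈ {u | adj r u} := hu
    have h2 : s ∈ {u | adj r u} := hrs
    rw [hc] at h1 h2
    simp only [Set.mem_singleton_iff] at h1 h2
    rw [h1, ← h2]
  -- s has a parent p distinct from r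
  obtain ⟨p, hps, hpr⟩ : ∃ p, adj p s ∧ p ≠ r := by
    obtain ⟨x, y, hxy, hset⟩ := Set.ncard_eq_two.mp hs.1
    have hrmem : r ∈ {u | adj u s} := hrs
    have hxmem : x ∈ {u | adj u s} := by rw [hset]; simp
    have hymem : y ∈ {u | adj u s} := by rw [hset]; simp
    rw [hset] at hrmem
    rcases hrmem with rfl | hrmem
    · exact ⟨y, hymem, fun h => hxy h.symm⟩
    · simp only [Set.mem_singleton_iff] at hrmem
      subst hrmem
      exact ⟨x, hxmem, hxy⟩
  -- from s one can never reach r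
  have hsnr : ¬ Relation.ReflTransGen adj s r :=
    fun h => hN.acyclic s (Relation.TransGen.tail' h hrs)
  -- a path from the root to p avoids r
  obtain ⟨lp, hlp⟩ := path_of_rtg (hN.reach p (hN.adj_mem hps).1)
  have hrlp : r ∉ lp := by
    intro hmem
    obtain ⟨_, l2, hpath⟩ := path_split hlp hmem
    have hrp : Relation.ReflTransGen adj r p := path_rtg hpath
    rcases Relation.ReflTransGen.cases_head hrp with rfl | ⟨c, hrc, hcp⟩
    · exact hpr rfl
    · rw [hchild c hrc] at hcp
      exact hN.acyclic s (Relation.TransGen.tail' hcp hps)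
  -- a path from the root to ℓ; it goes through r and then s
  obtain ⟨ll, hll⟩ := path_of_rtg (hN.reach ℓ hℓ.1)
  have hrll : r ∈ ll := hstab ll hll
  obtain ⟨_, l2, hpath2⟩ := path_split hll hrll
  have hrℓ : r ≠ ℓ := by
    intro h
    have := hℓ.2
    rw [← h] at this
    rw [hr.2] at this
    omega
  cases l2 with
  | nil =>
    have : r = ℓ := by simpa using hpath2.2.2
    exact hrℓ this
  | cons c l2' =>
    obtain ⟨hc, hh, hl⟩ := hpath2
    simp only [List.Chain', List.isChain_cons_cons] at hc
    have hcs : c = s := hchild c hc.1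
    subst hcs
    rw [List.getLast?_cons_cons] at hl
    have hpath3 : IsPathFromTo adj (c :: l2') c ℓ := ⟨hc.2, rfl, hl⟩
    -- r does not occur on the path from s to ℓ
    have hrs2 : r ∉ c :: l2' := by
      intro hmem
      exact hsnr (path_split hpath3 hmem).1
    -- combined path avoiding r
    have hcomb : IsPathFromTo adj (lp ++ c :: l2') root ℓ := path_append hlp hps hpath3
    have := hstab _ hcomb
    rcases List.mem_append.mp this with h | h
    · exact hrlp h
    · exact hrs2 h

lemma outdeg_le_two (hN : IsBinaryNetwork verts adj root) {v : V} (hv : v ∈ verts) :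
    outdeg adj v ≤ 2 := by
  by_cases h0 : outdeg adj v = 0
  · omega
  by_cases hroot : v = root
  · rw [hroot, hN.root_outdeg]
  rcases hN.internal_deg v hv hroot h0 with h | h
  · rw [h.2]
  · rw [h.2]; omega

end network

/-- Lemma 1: in a binary reticulation-visible network, one can injectively
assign to every reticulation one of its parents; deleting the corresponding
reticulation branches leaves every non-leaf vertex with outdegree at least 1
(no dummy leaves). -/
theorem exists_injective_parent_assignment {V : Type*} (verts : Set V)
    (adj : V → V → Prop) (root : V) (hN : IsBinaryNetwork verts adj root)
    (hRV : ReticulationVisible verts adj root) :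
    ∃ f : V → V,
      (∀ r : V, IsReticulation adj r → adj (f r) r) ∧
      (∀ r₁ r₂ : V, IsReticulation adj r₁ → IsReticulation adj r₂ →
        f r₁ = f r₂ → r₁ = r₂) ∧
      (∀ v ∈ verts, outdeg adj v ≠ 0 →
        ∃ c, adj v c ∧ ¬ (IsReticulation adj c ∧ f c = v)) := by
  classical
  set R : Set V := {r | IsReticulation adj r} with hR
  have hPfin : ∀ r : V, ({p | adj p r} : Set V).Finite :=
    fun r => hN.finite_verts.subset (fun p hp => (hN.adj_mem hp).1)
  have hCfin : ∀ v : V, ({u | adj v u} : Set V).Finite :=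
    fun v => hN.finite_verts.subset (fun u hu => (hN.adj_mem hu).2)
  set t : R → Finset V := fun r => (hPfin r.1).toFinset with ht
  have htmem : ∀ (r : R) (p : V), p ∈ t r ↔ adj p r.1 := by
    intro r p
    simp [ht, Set.Finite.mem_toFinset]
  have htcard : ∀ r : R, (t r).card = 2 := by
    intro r
    have h2 : indeg adj r.1 = 2 := r.2.1
    rw [ht]
    rw [← Set.ncard_eq_toFinset_card _ (hPfin r.1)]
    exact h2
  -- Hall's condition via double counting
  have hall : ∀ s : Finset R, s.card ≤ (s.biUnion t).card := by
    intro s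
    set B := s.biUnion t with hB
    have key : ∀ p ∈ B, (s.filter (fun r => p ∈ t r)).card ≤ 2 := by
      intro p hp
      have hpv : p ∈ verts := by
        simp only [hB, Finset.mem_biUnion] at hp
        obtain ⟨r, _, hpt⟩ := hp
        exact (hN.adj_mem ((htmem r p).mp hpt)).1
      calc (s.filter (fun r => p ∈ t r)).card
          ≤ ((hCfin p).toFinset).card := by
            apply Finset.card_le_card_of_injOn (fun r => r.1)
            · intro r hrmem
              rw [Finset.mem_coe, Finset.mem_filter] at hrmem
              rw [Finset.mem_coe, Set.Finite.mem_toFinset]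
              exact (htmem r p).mp hrmem.2
            · intro r1 _ r2 _ h
              exact Subtype.ext h
        _ = outdeg adj p := (Set.ncard_eq_toFinset_card _ (hCfin p)).symm
        _ ≤ 2 := outdeg_le_two hN hpv
    have hsub : ∀ r ∈ s, t r ⊆ B := fun r hr => Finset.subset_biUnion_of_mem t hr
    have h1 : ∑ r ∈ s, (t r).card = 2 * s.card := by
      rw [Finset.sum_congr rfl (fun r _ => htcard r)]
      rw [Finset.sum_const, smul_eq_mul, mul_comm]
    have h2 : ∑ r ∈ s, (t r).card = ∑ p ∈ B, (s.filter (fun r => p ∈ t r)).card := by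
      have : ∀ r ∈ s, (t r).card = ∑ p ∈ B, if p ∈ t r then 1 else 0 := by
        intro r hr
        rw [← Finset.card_filter]
        congr 1
        ext p
        simp only [Finset.mem_filter]
        exact ⟨fun h => ⟨hsub r hr h, h⟩, fun h => h.2⟩
      rw [Finset.sum_congr rfl this, Finset.sum_comm]
      apply Finset.sum_congr rfl
      intro p _
      exact (Finset.card_filter _ _).symm
    have h3 : ∑ p ∈ B, (s.filter (fun r => p ∈ t r)).card ≤ 2 * B.card := by
      calc ∑ p ∈ B, (s.filter (fun r => p ∈ t r)).card
          ≤ ∑ _p ∈ B, 2 := Finset.sum_le_sum key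
        _ = 2 * B.card := by rw [Finset.sum_const, smul_eq_mul, mul_comm]
    omega
  obtain ⟨f₀, hinj, hmem⟩ := (Finset.all_card_le_biUnion_card_iff_exists_injective t).mp hall
  have hadjf : ∀ r : R, adj (f₀ r) r.1 := fun r => (htmem r (f₀ r)).mp (hmem r)
  refine ⟨fun v => if h : IsReticulation adj v then f₀ ⟨v, h⟩ else v, ?_, ?_, ?_⟩
  · intro r hr
    simp only [dif_pos hr]
    exact hadjf ⟨r, hr⟩
  · intro r1 r2 h1 h2 heq
    simp only [dif_pos h1, dif_pos h2] at heq
    exact congrArg Subtype.val (hinj heq)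
  · intro v hv hvo
    have hle := outdeg_le_two hN hv
    rcases Nat.lt_or_ge (outdeg adj v) 2 with h | h
    · -- outdegree 1 : v is a reticulation, its child is not a reticulation
      have h1 : outdeg adj v = 1 := by omega
      obtain ⟨c, hc⟩ := Set.ncard_eq_one.mp h1
      have hvc : adj v c := by
        have : c ∈ {u | adj v u} := by rw [hc]; simp
        exact this
      refine ⟨c, hvc, ?_⟩
      rintro ⟨hcret, -⟩
      have hvroot : v ≠ root := by
        intro hh
        rw [hh, hN.root_outdeg] at h1
        omega
      have hvret : IsReticulation adj v := by
        rcases hN.internal_deg v hv hvroot hvo with htv | hrv'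
        · rw [htv.2] at h1; omega
        · exact hrv'
      exact no_retic_chain hN hRV hvret hcret hvc
    · -- outdegree 2 : injectivity saves one of the two children
      have h2 : outdeg adj v = 2 := le_antisymm hle h
      obtain ⟨c1, c2, hne, hset⟩ := Set.ncard_eq_two.mp h2
      have hvc1 : adj v c1 := by
        have : c1 ∈ {u | adj v u} := by rw [hset]; simp
        exact this
      have hvc2 : adj v c2 := by
        have : c2 ∈ {u | adj v u} := by rw [hset]; simp
        exact this
      by_contra hcon
      push_neg at hcon
      obtain ⟨hr1, hf1⟩ := hcon c1 hvc1
      obtain ⟨hr2, hf2⟩ := hcon c2 hvc2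
      rw [dif_pos hr1] at hf1
      rw [dif_pos hr2] at hf2
      have : (⟨c1, hr1⟩ : R) = ⟨c2, hr2⟩ := hinj (hf1.trans hf2.symm)
      exact hne (congrArg Subtype.val this)
end

section
/- In a binary nearly stable network, every parent of an unstable reticulation is stable and is not a reticulation. -/
/-!
A parent of an unstable vertex is stable by near stability. If such a parent were a
reticulation, its only child would be the unstable reticulation, so every root-to-leaf
path through the parent would continue to that child, making the child stable.
-/

theorem List.IsChain.exists_rel_of_mem_of_ne_getLast {α : Type*} {R : α → α → Prop}
    {l : List α} {x b : α} (hl : l.IsChain R) (hb : l.getLast? = some b) (hx : x ∈ l)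
    (hxb : x ≠ b) : ∃ y ∈ l, R x y := by
  obtain ⟨s, t, rfl⟩ := List.append_of_mem hx
  cases t with
  | nil => exact absurd (by simpa using hb) hxb
  | cons y t => exact ⟨y, by simp, (List.isChain_append_cons_cons.mp hl).2.1⟩

section Network

variable {V : Type*} {verts : Set V} {adj : V → V → Prop} {root : V}

theorem eq_of_adj_of_outdeg_eq_one_s9 {x y z : V} (h : outdeg adj x = 1) (hy : adj x y)
    (hz : adj x z) : y = z := by
  obtain ⟨c, hc⟩ := Set.ncard_eq_one.mp h
  have hyc : y ∈ ({c} : Set V) := hc ▸ hy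
  have hzc : z ∈ ({c} : Set V) := hc ▸ hz
  exact hyc.trans hzc.symm

theorem Stable.of_adj_of_outdeg_eq_one {x c : V} (hx : Stable verts adj root x)
    (hdeg : outdeg adj x = 1) (hxc : adj x c) : Stable verts adj root c := by
  obtain ⟨ℓ, hℓ, hall⟩ := hx
  refine ⟨ℓ, hℓ, fun l hl => ?_⟩
  have hxℓ : x ≠ ℓ := by
    rintro rfl
    exact one_ne_zero (hdeg.symm.trans hℓ.2)
  obtain ⟨y, hyl, hxy⟩ := hl.1.exists_rel_of_mem_of_ne_getLast hl.2.2 (hall l hl) hxℓ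
  rwa [eq_of_adj_of_outdeg_eq_one_s9 hdeg hxc hxy]

theorem NearlyStable.stable_of_adj_of_not_stable (hNS : NearlyStable verts adj root)
    {p c : V} (hc : c ∈ verts) (hunst : ¬ Stable verts adj root c) (hpc : adj p c) :
    Stable verts adj root p :=
  (hNS c hc).resolve_left hunst p hpc

end Network

theorem parent_of_unstable_reticulation_general {V : Type*} (verts : Set V)
    (adj : V → V → Prop) (root : V) (hN : IsBinaryNetwork verts adj root)
    (hNS : NearlyStable verts adj root) (a p : V)
    (hua : ¬ Stable verts adj root a)
    (hpa : adj p a) :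
    Stable verts adj root p ∧ ¬ IsReticulation adj p := by
  have hp : Stable verts adj root p :=
    hNS.stable_of_adj_of_not_stable (hN.adj_mem hpa).2 hua hpa
  exact ⟨hp, fun hret => hua (hp.of_adj_of_outdeg_eq_one hret.2 hpa)⟩

/-- In a binary nearly stable network, every parent of an unstable
reticulation is stable and is not a reticulation. -/
theorem parent_of_unstable_reticulation {V : Type*} (verts : Set V)
    (adj : V → V → Prop) (root : V) (hN : IsBinaryNetwork verts adj root)
    (hNS : NearlyStable verts adj root) (a p : V)
    (ha : IsReticulation adj a) (hua : ¬ Stable verts adj root a)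
    (hpa : adj p a) :
    Stable verts adj root p ∧ ¬ IsReticulation adj p :=
  parent_of_unstable_reticulation_general verts adj root hN hNS a p hua hpa
end

section
/- For every binary nearly stable network N, the number of unstable reticulations of N is at most twice the number of stable reticulations of N, i.e., U_ret(N) ≤ 2·S_ret(N). (Lemma 3) -/
/-!
The unique child `w` of an unstable reticulation `r` is stable, because its parent `r` is
not. If `w` had indegree one, every path through `w` would pass through its only parent
`r`, making `r` stable as well; so `w` is a stable reticulation. Each stable reticulation
has just two parents, whence at most two unstable reticulations share the same child.
-/

lemma List.IsChain.exists_rel_of_mem_tail {α : Type*} {R : α → α → Prop} {l : List α}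
    {w : α} (hl : l.IsChain R) (hw : w ∈ l.tail) : ∃ p ∈ l, R p w := by
  obtain ⟨i, hi, rfl⟩ := List.mem_iff_getElem.mp hw
  rw [List.length_tail] at hi
  exact ⟨l[i], List.getElem_mem _, by simpa using hl.getElem i (by omega)⟩

lemma Set.ncard_le_mul_ncard_of_forall_exists {α β : Type*} {s : Set α} {t : Set β}
    (r : α → β → Prop) {n : ℕ} (hs : s.Finite) (ht : t.Finite)
    (hst : ∀ a ∈ s, ∃ b ∈ t, r a b) (hn : ∀ b ∈ t, {a ∈ s | r a b}.ncard ≤ n) :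
    s.ncard ≤ n * t.ncard := by
  classical
  lift s to Finset α using hs
  lift t to Finset β using ht
  have := Finset.card_mul_le_card_mul r (m := 1) (n := n)
    (fun a ha ↦ Finset.card_pos.2 <| by simpa [Finset.Nonempty] using hst a ha)
    (fun b hb ↦ by simpa [Finset.bipartiteBelow, ← Set.ncard_coe_finset] using hn b hb)
  simpa [Set.ncard_coe_finset, mul_comm] using this

section Network

variable {V : Type*} {verts : Set V} {adj : V → V → Prop} {root : V}

lemma Stable.of_adj_of_indeg_eq_one {r w : V} (hw : Stable verts adj root w) (hrw : adj r w)
    (hw_root : w ≠ root) (hw_indeg : indeg adj w = 1) : Stable verts adj root r := by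
  obtain ⟨ℓ, hℓ, hall⟩ := hw
  refine ⟨ℓ, hℓ, fun l hl ↦ ?_⟩
  have hwl := hall l hl
  obtain ⟨hchain, hhead, -⟩ := hl
  cases l with
  | nil => simp at hhead
  | cons a t =>
    have hwt : w ∈ t :=
      (List.mem_cons.mp hwl).resolve_left fun h ↦ hw_root (h.trans (by simpa using hhead))
    obtain ⟨p, hp, hpw⟩ := hchain.exists_rel_of_mem_tail hwt
    obtain ⟨x, hx⟩ := Set.ncard_eq_one.mp hw_indeg
    have hparent : ∀ u, adj u w → u = x := fun u hu ↦
      Set.mem_singleton_iff.mp (hx ▸ hu : u ∈ ({x} : Set V))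
    rwa [hparent r hrw, ← hparent p hpw]

lemma IsReticulation.exists_adj {v : V} (hv : IsReticulation adj v) : ∃ w, adj v w := by
  obtain ⟨w, hw⟩ := Set.ncard_eq_one.mp hv.2
  exact ⟨w, show w ∈ {u | adj v u} from hw ▸ rfl⟩

namespace IsBinaryNetwork

lemma finite_parents (hN : IsBinaryNetwork verts adj root) (w : V) : {u | adj u w}.Finite :=
  hN.finite_verts.subset fun _ hu ↦ (hN.adj_mem hu).1

lemma mem_of_isReticulation (hN : IsBinaryNetwork verts adj root) {v : V}
    (hv : IsReticulation adj v) : v ∈ verts :=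
  (hN.adj_mem hv.exists_adj.choose_spec).1

lemma ne_root_of_adj_s11 (hN : IsBinaryNetwork verts adj root) {r w : V} (hrw : adj r w) :
    w ≠ root := by
  have hw_indeg : indeg adj w ≠ 0 := ((Set.ncard_pos (hN.finite_parents w)).mpr ⟨r, hrw⟩).ne'
  exact fun h ↦ hw_indeg (h ▸ hN.root_indeg)

lemma isReticulation_of_adj_of_indeg_ne_one (hN : IsBinaryNetwork verts adj root) {r w : V}
    (hrw : adj r w) (hw : indeg adj w ≠ 1) : IsReticulation adj w := by
  have hwv := (hN.adj_mem hrw).2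
  have hout : outdeg adj w ≠ 0 := fun h ↦ hw (hN.leaf_indeg w hwv h)
  exact (hN.internal_deg w hwv (hN.ne_root_of_adj_s11 hrw) hout).resolve_left fun ht ↦ hw ht.1

lemma exists_adj_stable_reticulation (hN : IsBinaryNetwork verts adj root)
    (hNS : NearlyStable verts adj root) {r : V} (hr : IsReticulation adj r)
    (hr_unstable : ¬ Stable verts adj root r) :
    ∃ w, adj r w ∧ IsReticulation adj w ∧ Stable verts adj root w := by
  obtain ⟨w, hrw⟩ := hr.exists_adj
  have hws : Stable verts adj root w :=
    (hNS w (hN.adj_mem hrw).2).resolve_right fun h ↦ hr_unstable (h r hrw)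
  have hw_indeg : indeg adj w ≠ 1 := fun h ↦
    hr_unstable (hws.of_adj_of_indeg_eq_one hrw (hN.ne_root_of_adj_s11 hrw) h)
  exact ⟨w, hrw, hN.isReticulation_of_adj_of_indeg_ne_one hrw hw_indeg, hws⟩

end IsBinaryNetwork

end Network

/-- Lemma 3: in a binary nearly stable network,
`U_ret(N) ≤ 2 * S_ret(N)`. -/
theorem unstable_le_two_mul_stable {V : Type*} (verts : Set V)
    (adj : V → V → Prop) (root : V) (hN : IsBinaryNetwork verts adj root)
    (hNS : NearlyStable verts adj root) :
    {v : V | IsReticulation adj v ∧ ¬ Stable verts adj root v}.ncard ≤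
      2 * {v : V | IsReticulation adj v ∧ Stable verts adj root v}.ncard := by
  refine Set.ncard_le_mul_ncard_of_forall_exists adj
    (hN.finite_verts.subset fun v hv ↦ hN.mem_of_isReticulation hv.1)
    (hN.finite_verts.subset fun v hv ↦ hN.mem_of_isReticulation hv.1)
    (fun r ⟨hr, hr_unstable⟩ ↦ ?_) (fun w ⟨hw, _⟩ ↦ ?_)
  · obtain ⟨w, hrw, hw, hws⟩ := hN.exists_adj_stable_reticulation hNS hr hr_unstable
    exact ⟨w, ⟨hw, hws⟩, hrw⟩
  · calc {r | r ∈ {v | IsReticulation adj v ∧ ¬ Stable verts adj root v} ∧ adj r w}.ncard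
        ≤ indeg adj w := Set.ncard_le_ncard (fun _ hr ↦ hr.2) (hN.finite_parents w)
      _ = 2 := hw.1
end
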